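/- arXiv:1301.6865 — 2 statements merged into one kernel-verified Lean document; each statement's English description precedes it below -/
import Mathlib

section
/- Every S-quasinormal subgroup of a finite group G is subnormal in G. -/
open scoped Pointwise

/-- `H` is S-quasinormal in `G` if it permutes with every Sylow subgroup of `G`. -/
def SQuasinormal (G : Type*) [Group G] (H : Subgroup G) : Prop :=
  ∀ (p : ℕ), p.Prime → ∀ P : Sylow p G,
    (H : Set G) * ((P : Subgroup G) : Set G) = ((P : Subgroup G) : Set G) * (H : Set G)

/-- `H` is subnormal in `G`: there is a chain `H = s 0 ⊴ s 1 ⊴ ⋯ ⊴ s n = G`. -/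
def IsSubnormalSubgroup (G : Type*) [Group G] (H : Subgroup G) : Prop :=
  ∃ (n : ℕ) (s : ℕ → Subgroup G), s 0 = H ∧ s n = ⊤ ∧
    ∀ i < n, s i ≤ s (i + 1) ∧ ((s i).subgroupOf (s (i + 1))).Normal

/-!
Kegel's argument, by induction on `|G|` and, inside a fixed `G`, downward on `H`.
If `H ⊔ P = G` for a Sylow `p`-subgroup `P`, then `HP = G`, so `|G : H|` divides `|P|`; for a
Sylow `q`-subgroup `Q` with `q ≠ p` the index of `H` in the subgroup `HQ` divides both `|G : H|`
and `|Q|`, so `Q ≤ H`. Hence the normal core of `H` has `p`-power index, `G` modulo the core is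
nilpotent, and `H` is subnormal. If every element of every Sylow subgroup normalises `H`, then `H`
is normal. Otherwise some `g ∈ P` moves `H`, and `HP < G`; the join `J = ⟨H, gHg⁻¹⟩` lies in
`HP`, is S-quasinormal and strictly contains `H`, so `H` is subnormal in the smaller group `J` and
`J` is subnormal in `G`.
-/

namespace Subgroup

variable {G : Type*} [Group G]

theorem le_stabilizer_of_mul_subset {C : Subgroup G} {X : Set G} (h : (C : Set G) * X ⊆ X) :
    C ≤ MulAction.stabilizer G X := by
  have hsub : ∀ c ∈ C, c • X ⊆ X := fun c hc => (Set.smul_set_subset_mul hc).trans h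
  intro c hc
  exact (hsub c hc).antisymm (Set.subset_smul_set_iff.2 (hsub c⁻¹ (inv_mem hc)))

theorem mul_comm_of_mul_subset {H K : Subgroup G} (h : (H : Set G) * K ⊆ K * H) :
    (H : Set G) * K = K * H := by
  refine h.antisymm ?_
  simpa only [mul_inv_rev, inv_coe_set] using Set.inv_subset_inv.2 h

theorem coe_sup_of_mul_comm {H K : Subgroup G} (h : (H : Set G) * K = K * H) :
    ((H ⊔ K : Subgroup G) : Set G) = H * K := by
  refine le_antisymm (fun x hx => ?_) (Set.mul_subset_iff.2 fun a ha b hb =>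
    mul_mem (mem_sup_left ha) (mem_sup_right hb))
  have hstab : H ⊔ K ≤ MulAction.stabilizer G ((H : Set G) * K) := by
    refine sup_le (le_stabilizer_of_mul_subset ?_) (le_stabilizer_of_mul_subset ?_)
    · rw [← mul_assoc, coe_mul_coe]
    · rw [← mul_assoc, ← h, mul_assoc, coe_mul_coe]
  rw [← MulAction.mem_stabilizer_iff.1 (hstab hx)]
  exact Set.mem_smul_set.2 ⟨1, ⟨1, one_mem H, 1, one_mem K, mul_one 1⟩, mul_one x⟩

theorem sup_mul_comm_of_mul_comm {A B P : Subgroup G} (hA : (A : Set G) * P = P * A)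
    (hB : (B : Set G) * P = P * B) :
    ((A ⊔ B : Subgroup G) : Set G) * P = P * (A ⊔ B : Subgroup G) := by
  set J := A ⊔ B
  have key : ∀ C : Subgroup G, C ≤ J → (C : Set G) * P = P * C →
      C ≤ MulAction.stabilizer G ((P : Set G) * J) := fun C hCJ hC =>
    le_stabilizer_of_mul_subset <| by
      rw [← mul_assoc, hC, mul_assoc]
      exact Set.mul_subset_mul_left (mul_subset hCJ subset_rfl)
  have hJ := sup_le (key A le_sup_left hA) (key B le_sup_right hB)
  refine mul_comm_of_mul_subset (Set.mul_subset_iff.2 fun x hx y hy => ?_)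
  rw [← MulAction.mem_stabilizer_iff.1 (hJ hx), ← smul_eq_mul x y]
  exact Set.smul_mem_smul_set ⟨y, hy, 1, one_mem J, mul_one y⟩

theorem relIndex_sup_of_mul_comm {H K : Subgroup G} (h : (H : Set G) * K = K * H) :
    H.relIndex (H ⊔ K) = H.relIndex K := by
  let f := quotientSubgroupOfEmbeddingOfLE H (le_sup_right : K ≤ H ⊔ K)
  have hf : Function.Surjective f := by
    intro y
    obtain ⟨⟨x, hx⟩, rfl⟩ := QuotientGroup.mk_surjective y
    rw [← SetLike.mem_coe, sup_comm, coe_sup_of_mul_comm h.symm] at hx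
    obtain ⟨k, hk, a, ha, rfl⟩ := hx
    refine ⟨QuotientGroup.mk ⟨k, hk⟩, QuotientGroup.eq.2 ?_⟩
    simpa [mem_subgroupOf] using ha
  exact (Nat.card_congr (Equiv.ofBijective f ⟨f.injective, hf⟩)).symm

theorem le_of_mul_comm_of_coprime {H K : Subgroup G} (h : (H : Set G) * K = K * H)
    (hcop : Nat.Coprime H.index (Nat.card K)) : K ≤ H :=
  relIndex_eq_one.1 <| Nat.eq_one_of_dvd_coprimes hcop
    (relIndex_sup_of_mul_comm h ▸ relIndex_dvd_index_of_le le_sup_left) (relIndex_dvd_card H K)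

theorem index_dvd_card_of_mul_comm_of_sup_eq_top {H K : Subgroup G}
    (h : (H : Set G) * K = K * H) (htop : H ⊔ K = ⊤) : H.index ∣ Nat.card K := by
  rw [← relIndex_top_right, ← htop, relIndex_sup_of_mul_comm h]
  exact relIndex_dvd_card H K

theorem mul_comm_inf_of_le {H K J : Subgroup G} (hHJ : H ≤ J) (h : (H : Set G) * K = K * H) :
    (H : Set G) * ↑(K ⊓ J) = ↑(K ⊓ J) * H := by
  rw [mul_inf_assoc H K J hHJ, inf_comm, inf_mul_assoc J K H hHJ, h, Set.inter_comm]

section Finite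

variable [Finite G]

theorem isSubnormal_of_normalizerCondition (hG : NormalizerCondition G) (H : Subgroup G) :
    H.IsSubnormal := by
  induction H using WellFoundedGT.induction with
  | _ H ih =>
    rcases eq_or_ne H ⊤ with rfl | hH
    · exact .top
    · exact .step H _ le_normalizer (ih _ (hG H hH.lt_top)) normal_in_normalizer

theorem isSubnormal_of_le_of_isNilpotent_quotient {N H : Subgroup G} [N.Normal]
    [Group.IsNilpotent (G ⧸ N)] (hNH : N ≤ H) : H.IsSubnormal := by
  have := (isSubnormal_of_normalizerCondition Group.normalizerCondition_of_isNilpotent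
    (H.map (QuotientGroup.mk' N))).comap (QuotientGroup.mk' N)
  rwa [comap_map_eq_self (by rwa [QuotientGroup.ker_mk'])] at this

theorem eq_top_of_forall_sylow_le {H : Subgroup G}
    (h : ∀ p, p.Prime → ∀ P : Sylow p G, (P : Subgroup G) ≤ H) : H = ⊤ := by
  rw [← index_eq_one, Nat.eq_one_iff_not_exists_prime_dvd]
  intro p hp
  have := Fact.mk hp
  obtain ⟨P⟩ : Nonempty (Sylow p G) := inferInstance
  exact fun hdvd => P.not_dvd_index (hdvd.trans (index_dvd_of_le (h p hp P)))

theorem isPGroup_quotient_of_forall_sylow_le {p : ℕ} {N : Subgroup G} [N.Normal]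
    (h : ∀ q, q.Prime → q ≠ p → ∀ Q : Sylow q G, (Q : Subgroup G) ≤ N) :
    IsPGroup p (G ⧸ N) := by
  refine IsPGroup.of_card (Nat.eq_prime_pow_of_unique_prime_dvd (Nat.card_pos.ne') ?_)
  intro q hq hdvd
  by_contra hqp
  have := Fact.mk hq
  obtain ⟨Q⟩ : Nonempty (Sylow q G) := inferInstance
  exact Q.not_dvd_index (hdvd.trans (index_dvd_of_le (h q hq hqp Q)))

theorem normal_of_forall_sylow_conj_le {H : Subgroup G}
    (h : ∀ p, p.Prime → ∀ P : Sylow p G, ∀ g ∈ P, MulAut.conj g • H ≤ H) : H.Normal := by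
  refine normalizer_eq_top_iff.1 (eq_top_of_forall_sylow_le fun p hp P g hg => ?_)
  have hfix : MulAut.conj g • H = H := (h p hp P g hg).antisymm <|
    subset_pointwise_smul_iff.2 (by simpa using h p hp P g⁻¹ (inv_mem hg))
  refine mem_normalizer_iff.2 fun x => ?_
  conv_rhs => rw [← hfix]
  exact smul_mem_pointwise_smul_iff.symm

end Finite

end Subgroup

namespace SQuasinormal

open Subgroup

variable {G : Type*} [Group G] {H : Subgroup G}

theorem conj (hH : SQuasinormal G H) (g : G) : SQuasinormal G (MulAut.conj g • H) := by
  intro p hp P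
  obtain ⟨Q, rfl⟩ : ∃ Q : Sylow p G, g • Q = P := ⟨g⁻¹ • P, smul_inv_smul g P⟩
  simp only [Sylow.coe_subgroup_smul, coe_pointwise_smul, ← Set.image_smul, MulAut.smul_def,
    ← Set.image_mul, hH p hp Q]

theorem sup {K : Subgroup G} (hH : SQuasinormal G H) (hK : SQuasinormal G K) :
    SQuasinormal G (H ⊔ K) :=
  fun p hp P => sup_mul_comm_of_mul_comm (hH p hp P) (hK p hp P)

theorem subgroupOf (hH : SQuasinormal G H) {J : Subgroup G} (hHJ : H ≤ J) :
    SQuasinormal J (H.subgroupOf J) := by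
  intro p hp P
  obtain ⟨Q, hQ⟩ := P.exists_comap_subtype_eq
  apply Set.image_injective.2 J.subtype_injective
  simp only [← hQ, Set.image_mul, ← coe_map, comap_subtype, subgroupOf_map_subtype,
    inf_eq_left.2 hHJ]
  exact mul_comm_inf_of_le hHJ (hH p hp Q)

section Finite

variable [Finite G]

theorem isSubnormal_of_sup_sylow_eq_top (hH : SQuasinormal G H) {p : ℕ} (hp : p.Prime)
    (P : Sylow p G) (htop : H ⊔ P = ⊤) : H.IsSubnormal := by
  have := Fact.mk hp
  obtain ⟨n, hn⟩ := IsPGroup.iff_card.1 P.isPGroup'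
  have hidx : H.index ∣ p ^ n := hn ▸ index_dvd_card_of_mul_comm_of_sup_eq_top (hH p hp P) htop
  have hsylow : ∀ q, q.Prime → q ≠ p → ∀ Q : Sylow q G, (Q : Subgroup G) ≤ H.normalCore := by
    intro q hq hqp Q x hx g
    have := Fact.mk hq
    obtain ⟨m, hm⟩ := IsPGroup.iff_card.1 (g • Q).isPGroup'
    have hcop : Nat.Coprime H.index (Nat.card ((g • Q : Sylow q G) : Subgroup G)) := hm ▸
      Nat.Coprime.coprime_dvd_left hidx
        (Nat.Coprime.pow n m ((Nat.coprime_primes hp hq).2 hqp.symm))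
    refine le_of_mul_comm_of_coprime (hH q hq (g • Q)) hcop ?_
    rw [Sylow.coe_subgroup_smul]
    exact smul_mem_pointwise_smul x (MulAut.conj g) _ hx
  have := (isPGroup_quotient_of_forall_sylow_le hsylow).isNilpotent
  exact isSubnormal_of_le_of_isNilpotent_quotient H.normalCore_le

theorem isSubnormal (hH : SQuasinormal G H) : H.IsSubnormal := by
  induction hcard : Nat.card G using Nat.strong_induction_on generalizing G with
  | _ n ihG =>
  induction H using WellFoundedGT.induction with
  | _ H ihH =>
  by_cases htop : ∃ p, ∃ hp : p.Prime, ∃ P : Sylow p G, H ⊔ P = ⊤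
  · obtain ⟨p, hp, P, htop⟩ := htop
    exact hH.isSubnormal_of_sup_sylow_eq_top hp P htop
  by_cases hconj : ∀ p, p.Prime → ∀ P : Sylow p G, ∀ g ∈ P, MulAut.conj g • H ≤ H
  · exact (normal_of_forall_sylow_conj_le hconj).isSubnormal
  push Not at htop hconj
  obtain ⟨p, hp, P, g, hg, hgH⟩ := hconj
  set J := H ⊔ MulAut.conj g • H
  have hHJ : H < J := lt_of_le_of_ne le_sup_left fun h => hgH (le_sup_right.trans h.ge)
  have hJ : J ≠ ⊤ := ne_top_of_le_ne_top (htop p hp P)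
    (sup_le le_sup_left (conj_smul_le_of_le le_sup_left ⟨g, mem_sup_right hg⟩))
  have hcardJ : Nat.card J < n := hcard ▸
    (card_le_card_group J).lt_of_ne fun h => hJ (eq_top_of_card_eq J h)
  exact .trans hHJ.le (ihG _ hcardJ (hH.subgroupOf hHJ.le) rfl)
    (ihH J hHJ (hH.sup (hH.conj g)))

end Finite

end SQuasinormal

/-- Every S-quasinormal subgroup of a finite group is subnormal. -/
theorem sQuasinormal_subnormal {G : Type*} [Group G] [Finite G] (H : Subgroup G)
    (hH : SQuasinormal G H) : IsSubnormalSubgroup G H := by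
  obtain ⟨n, s, hmono, hnormal, h0, hn⟩ := hH.isSubnormal.exists_chain
  exact ⟨n, s, h0, hn, fun i _ => ⟨hmono i.le_succ, hnormal i⟩⟩
end

section
/- Let H be a weakly τ-embedded subgroup of a finite group G and N a normal subgroup of G with gcd(|H|, |N|) = 1. Then HN/N is weakly τ-embedded in G/N. -/
open scoped Pointwise

/-- `H` is τ-quasinormal in `G` if it permutes with every Sylow `q`-subgroup `Q` of `G`
such that `q ∤ |H|` and `gcd(|H|, |Q^G|) ≠ 1`. -/
def TauQuasinormal (G : Type*) [Group G] (H : Subgroup G) : Prop :=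
  ∀ (q : ℕ), q.Prime → ∀ Q : Sylow q G,
    ¬ q ∣ Nat.card H →
    Nat.gcd (Nat.card H) (Nat.card (Subgroup.normalClosure ((Q : Subgroup G) : Set G))) ≠ 1 →
    (H : Set G) * ((Q : Subgroup G) : Set G) = ((Q : Subgroup G) : Set G) * (H : Set G)

/-- `H_{τG}`: the subgroup generated by all subgroups of `H` that are τ-quasinormal in `G`. -/
def tauCore (G : Type*) [Group G] (H : Subgroup G) : Subgroup G :=
  ⨆ (L : Subgroup G) (_ : L ≤ H) (_ : TauQuasinormal G L), L

/-- `H` is weakly τ-embedded in `G` if there is a normal subgroup `K` with `HK`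
S-quasinormal in `G` and `H ∩ K ≤ H_{τG}`. (Since `K` is normal, `HK = H ⊔ K`.) -/
def WeaklyTauEmbedded (G : Type*) [Group G] (H : Subgroup G) : Prop :=
  ∃ K : Subgroup G, K.Normal ∧ SQuasinormal G (H ⊔ K) ∧ H ⊓ K ≤ tauCore G H

/-! All three ingredients of weak τ-embedding pass to images under a surjection `f` whose
kernel has order coprime to `|H|`: permutability with Sylow subgroups descends because every
Sylow subgroup of the image is the image of a Sylow subgroup; `f` is injective on every
subgroup of `H`, so the orders entering the definition of τ-quasinormality are unchanged;
and coprimality gives `f H ∩ f K = f (H ∩ K)` for normal `K`. -/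

namespace Subgroup

variable {G G' : Type*} [Group G] [Group G']

theorem card_map_of_disjoint_ker {f : G →* G'} {L : Subgroup G} (h : Disjoint L f.ker) :
    Nat.card (L.map f) = Nat.card L := by
  rw [← relIndex_ker, ← inf_relIndex_right, disjoint_iff.mp h.symm, relIndex_bot_left]

theorem coe_map_mul_comm (f : G →* G') {A B : Subgroup G} (h : (A : Set G) * B = B * A) :
    (A.map f : Set G') * B.map f = B.map f * A.map f := by
  simp only [coe_map, ← Set.image_mul, h]

theorem map_inf_map_le_map_inf_of_coprime {f : G →* G'} {H K : Subgroup G} [K.Normal]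
    (hco : Nat.Coprime (Nat.card H) (Nat.card f.ker)) :
    H.map f ⊓ K.map f ≤ (H ⊓ K).map f := by
  rintro _ ⟨⟨h, hh, rfl⟩, ⟨k, hk, hkh⟩⟩
  refine ⟨h, ⟨hh, ?_⟩, rfl⟩
  have hn : k⁻¹ * h ∈ f.ker := by simp [MonoidHom.mem_ker, hkh]
  -- Modulo `K`, the element `h` lies both in the image of `H` and in that of `ker f`.
  let π := QuotientGroup.mk' K
  have hπ : π h ∈ H.map π ⊓ f.ker.map π :=
    ⟨⟨h, hh, rfl⟩, ⟨k⁻¹ * h, hn, by simp [π, SetLike.mem_coe.mp hk]⟩⟩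
  have hdisj : Disjoint (H.map π) (f.ker.map π) :=
    disjoint_of_coprime_natCard (hco.of_dvd (card_map_dvd H π) (card_map_dvd f.ker π))
  rw [disjoint_iff.mp hdisj, mem_bot] at hπ
  exact (QuotientGroup.eq_one_iff h).mp hπ

end Subgroup

theorem le_tauCore {G : Type*} [Group G] {H L : Subgroup G} (hLH : L ≤ H)
    (hL : TauQuasinormal G L) : L ≤ tauCore G H :=
  le_iSup_of_le L <| le_iSup_of_le hLH <| le_iSup_of_le hL le_rfl

section

open Subgroup

variable {G G' : Type*} [Group G] [Group G'] [Finite G] {f : G →* G'}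

theorem SQuasinormal.map (hf : Function.Surjective f) {S : Subgroup G}
    (h : SQuasinormal G S) : SQuasinormal G' (S.map f) := by
  intro p hp P'
  have : Fact p.Prime := ⟨hp⟩
  obtain ⟨P, rfl⟩ := Sylow.mapSurjective_surjective hf p P'
  exact coe_map_mul_comm f (h p hp P)

theorem TauQuasinormal.map (hf : Function.Surjective f) {L : Subgroup G}
    (hco : Nat.Coprime (Nat.card L) (Nat.card f.ker)) (h : TauQuasinormal G L) :
    TauQuasinormal G' (L.map f) := by
  rw [TauQuasinormal, card_map_of_disjoint_ker (disjoint_of_coprime_natCard hco)]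
  intro q hq Q' hqL hgcd
  have : Fact q.Prime := ⟨hq⟩
  obtain ⟨Q, rfl⟩ := Sylow.mapSurjective_surjective hf q Q'
  refine coe_map_mul_comm f (h q hq Q hqL fun hone => hgcd ?_)
  rw [Sylow.coe_mapSurjective, coe_map, ← map_normalClosure _ _ hf]
  exact Nat.Coprime.coprime_dvd_right (card_map_dvd _ f) hone

theorem tauCore_map_le (hf : Function.Surjective f) {H : Subgroup G}
    (hco : Nat.Coprime (Nat.card H) (Nat.card f.ker)) :
    (tauCore G H).map f ≤ tauCore G' (H.map f) := by
  simp only [tauCore, Subgroup.map_iSup]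
  exact iSup_le fun L => iSup_le fun hLH => iSup_le fun hL =>
    le_tauCore (map_mono hLH) (hL.map hf (hco.coprime_dvd_left (card_dvd_of_le hLH)))

theorem WeaklyTauEmbedded.map (hf : Function.Surjective f) {H : Subgroup G}
    (hco : Nat.Coprime (Nat.card H) (Nat.card f.ker)) (hH : WeaklyTauEmbedded G H) :
    WeaklyTauEmbedded G' (H.map f) := by
  obtain ⟨K, hK, hSQ, hcore⟩ := hH
  refine ⟨K.map f, hK.map f hf, by simpa only [Subgroup.map_sup] using hSQ.map hf, ?_⟩
  calc H.map f ⊓ K.map f ≤ (H ⊓ K).map f := map_inf_map_le_map_inf_of_coprime hco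
    _ ≤ (tauCore G H).map f := map_mono hcore
    _ ≤ tauCore G' (H.map f) := tauCore_map_le hf hco

end

/-- If `H` is weakly τ-embedded in a finite group `G` and `N ⊴ G` with
`gcd(|H|,|N|) = 1`, then `HN/N` is weakly τ-embedded in `G/N`. -/
theorem weaklyTauEmbedded_quotient {G : Type*} [Group G] [Finite G] (H N : Subgroup G)
    [N.Normal] (hco : Nat.Coprime (Nat.card H) (Nat.card N))
    (hH : WeaklyTauEmbedded G H) :
    WeaklyTauEmbedded (G ⧸ N) (H.map (QuotientGroup.mk' N)) :=
  hH.map (QuotientGroup.mk'_surjective N) (by rwa [QuotientGroup.ker_mk'])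
end
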